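/- Let c > 0, Δ > 0, M ≥ 1. Define g(x) = log((x − Δ)/x) + cΔ/(3·x·(x − Δ)) for x > Δ, let x* > Δ be such that g(x*) = 0, g > 0 on (Δ, x*), and g < 0 on (x*, ∞), and let θ satisfy Δ < θ ≤ x*. Consider a probability space carrying a uniform random bit S ∈ {0, 1} and Z_1, …, Z_M with S, Z_1, …, Z_M mutually independent and each Z_m with law ν_c; set Y_m = Δ·S + Z_m. Define the ML detector Ŝ_ML(Y) = 1 if Y_m > Δ for all m and ∑_m g(Y_m) ≤ 0, and Ŝ_ML(Y) = 0 otherwise; define the first-arrival detector Ŝ_FA(Y) = 1 if min_m Y_m ≥ θ, else 0. Then the mismatch probability satisfies P( Ŝ_ML ≠ Ŝ_FA ) ≤ (1/2)·[ Ψ(c, M, x*) − Ψ(c, M, Δ) + Ψ(c, M, x* − Δ) ], where Ψ(c, M, t) = 1 − (1 − erfc(√(c/(2t))))^M for t > 0 and Ψ(c, M, t) = 0 for t ≤ 0. -/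

import Mathlib

open MeasureTheory ProbabilityTheory
open scoped Classical

/-- The Lévy density with location 0 and scale `c`. -/
noncomputable def levyDensity (c z : ℝ) : ℝ :=
  if 0 < z then Real.sqrt (c / (2 * Real.pi * z ^ 3)) * Real.exp (-c / (2 * z)) else 0

/-- The Lévy distribution with location 0 and scale `c`, as a measure on `ℝ`. -/
noncomputable def levyMeasure (c : ℝ) : Measure ℝ :=
  volume.withDensity fun z => ENNReal.ofReal (levyDensity c z)

/-- The complementary error function `erfc x = (2/√π) ∫_x^∞ exp(−u²) du`. -/
noncomputable def erfc (x : ℝ) : ℝ :=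
  (2 / Real.sqrt Real.pi) * ∫ u in Set.Ioi x, Real.exp (-u ^ 2)

/-- The per-sample log-likelihood-ratio of the `M`-particle ML detector. -/
noncomputable def gLLR (c Δ x : ℝ) : ℝ :=
  Real.log ((x - Δ) / x) + c * Δ / (3 * x * (x - Δ))

/-- `Ψ(c, M, t)`: the CDF, at `t`, of the minimum of `M` i.i.d. Lévy variables. -/
noncomputable def Psi (c : ℝ) (M : ℕ) (t : ℝ) : ℝ :=
  if 0 < t then 1 - (1 - erfc (Real.sqrt (c / (2 * t)))) ^ M else 0

/-! The ML and first-arrival detectors can only disagree on samples lying in a thin band: if every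
sample exceeds `x*`, both decide `1` (each `g(Y_m) < 0`, and `θ ≤ x*`), and if some sample is at
most `Δ`, both decide `0` (as `θ > Δ`). Hence a mismatch forces either `S = 0` and
`Δ < min Z ≤ x*`, or `S = 1` and `min Z ≤ x* − Δ`. By independence,
`P(min Z > t) = (1 − erfc √(c/2t))^M`, the Lévy tail being obtained by the fundamental theorem
of calculus from `d/dt erfc √(c/2t) = f_c(t)`. -/

open Set Filter Topology

theorem hasDerivAt_integral_Ioi {E : Type*} [NormedAddCommGroup E] [NormedSpace ℝ E]
    [CompleteSpace E] {f : ℝ → E} (hf : Integrable f) {x : ℝ} (hfx : ContinuousAt f x) :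
    HasDerivAt (fun y => ∫ u in Ioi y, f u) (-f x) x := by
  have hsplit : (fun y => ∫ u in Ioi y, f u) = fun y => (∫ u in Ioi 0, f u) - ∫ u in 0..y, f u := by
    funext y
    rw [eq_sub_iff_add_eq, add_comm,
      intervalIntegral.integral_interval_add_Ioi hf.integrableOn hf.integrableOn]
  rw [hsplit, ← zero_sub]
  exact (hasDerivAt_const x _).sub <| intervalIntegral.integral_hasDerivAt_right
    hf.intervalIntegrable hf.aestronglyMeasurable.stronglyMeasurableAtFilter hfx

theorem hasDerivAt_erfc (x : ℝ) :
    HasDerivAt erfc (-(2 / Real.sqrt Real.pi) * Real.exp (-x ^ 2)) x := by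
  have hint : Integrable fun u : ℝ => Real.exp (-u ^ 2) := by
    simpa using integrable_exp_neg_mul_sq one_pos
  have h := (hasDerivAt_integral_Ioi hint (x := x) (by fun_prop)).const_mul (2 / Real.sqrt Real.pi)
  rwa [mul_neg, ← neg_mul] at h

theorem erfc_zero : erfc 0 = 1 := by
  have h := integral_gaussian_Ioi 1
  simp only [one_mul, div_one, neg_mul] at h
  rw [erfc, h]
  field_simp

/-- The CDF of the Lévy distribution of scale `c`; it is meaningful only for `0 < t`. -/
noncomputable def levyCDF (c t : ℝ) : ℝ :=
  erfc (Real.sqrt (c / (2 * t)))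

theorem Psi_of_pos {t : ℝ} (c : ℝ) (M : ℕ) (ht : 0 < t) :
    Psi c M t = 1 - (1 - levyCDF c t) ^ M :=
  if_pos ht

theorem levyDensity_nonneg (c z : ℝ) : 0 ≤ levyDensity c z := by
  unfold levyDensity
  split_ifs <;> positivity

theorem hasDerivAt_levyCDF {c t : ℝ} (hc : 0 < c) (ht : 0 < t) :
    HasDerivAt (levyCDF c) (levyDensity c t) t := by
  have hu : 0 < c / (2 * t) := by positivity
  have hinner : HasDerivAt (fun x => c / (2 * x)) (-(c / (2 * t ^ 2))) t := by
    have hform : (fun x => c / (2 * x)) = fun x => c / 2 * x⁻¹ := by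
      funext x; ring
    rw [hform]
    exact ((hasDerivAt_inv ht.ne').const_mul (c / 2)).congr_deriv (by ring)
  have h := (hasDerivAt_erfc _).comp t ((Real.hasDerivAt_sqrt hu.ne').comp t hinner)
  set s := Real.sqrt (c / (2 * t)) with hs
  have hs2 : s ^ 2 = c / (2 * t) := Real.sq_sqrt hu.le
  have hdensity : Real.sqrt (c / (2 * Real.pi * t ^ 3)) = s / (Real.sqrt Real.pi * t) := by
    rw [← Real.sqrt_sq (by positivity : 0 ≤ s / (Real.sqrt Real.pi * t)), div_pow, mul_pow,
      Real.sq_sqrt Real.pi_pos.le, hs2]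
    congr 1
    field_simp
  have hslope : c / (2 * t ^ 2) = s ^ 2 / t := by
    rw [hs2]; field_simp
  refine h.congr_deriv ?_
  simp only [Function.comp_apply, ← hs]
  rw [levyDensity, if_pos ht, hdensity, neg_div, ← hs2, hslope]
  field_simp

theorem tendsto_levyCDF_atTop (c : ℝ) : Tendsto (levyCDF c) atTop (𝓝 1) := by
  have h : Tendsto (fun x : ℝ => Real.sqrt (c / (2 * x))) atTop (𝓝 0) := by
    have h2x : Tendsto (fun x : ℝ => 2 * x) atTop atTop :=
      (tendsto_const_mul_atTop_of_pos two_pos).mpr tendsto_id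
    simpa using (h2x.const_div_atTop c).sqrt
  have h1 := (hasDerivAt_erfc 0).continuousAt.tendsto.comp h
  rwa [erfc_zero] at h1

theorem integral_Ioi_levyDensity {c t : ℝ} (hc : 0 < c) (ht : 0 < t) :
    ∫ z in Ioi t, levyDensity c z = 1 - levyCDF c t :=
  integral_Ioi_of_hasDerivAt_of_nonneg' (fun _ hx => hasDerivAt_levyCDF hc (ht.trans_le hx))
    (fun x _ => levyDensity_nonneg c x) (tendsto_levyCDF_atTop c)

theorem levyMeasure_real_Ioi {c t : ℝ} (hc : 0 < c) (ht : 0 < t) :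
    (levyMeasure c).real (Ioi t) = 1 - levyCDF c t := by
  have hint : IntegrableOn (levyDensity c) (Ioi t) :=
    integrableOn_Ioi_deriv_of_nonneg' (fun _ hx => hasDerivAt_levyCDF hc (ht.trans_le hx))
      (fun x _ => levyDensity_nonneg c x) (tendsto_levyCDF_atTop c)
  rw [measureReal_def, levyMeasure, withDensity_apply _ measurableSet_Ioi,
    ← ofReal_integral_eq_lintegral_ofReal hint (.of_forall (levyDensity_nonneg c)),
    ENNReal.toReal_ofReal (setIntegral_nonneg measurableSet_Ioi fun z _ => levyDensity_nonneg c z),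
    integral_Ioi_levyDensity hc ht]

theorem measureReal_inter_iInter_preimage_of_iIndepFun_cons {Ω β : Type*} [MeasurableSpace Ω]
    [MeasurableSpace β] {μ : Measure Ω} {n : ℕ} {X : Ω → β} {Y : Fin n → Ω → β}
    (h : iIndepFun (Fin.cons X Y : Fin (n + 1) → Ω → β) μ) {A : Set β} (hA : MeasurableSet A)
    {B : Fin n → Set β} (hB : ∀ i, MeasurableSet (B i)) :
    μ.real (X ⁻¹' A ∩ ⋂ i, Y i ⁻¹' B i) = μ.real (X ⁻¹' A) * ∏ i, μ.real (Y i ⁻¹' B i) := by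
  have hsets : ∀ i ∈ (Finset.univ : Finset (Fin (n + 1))),
      MeasurableSet ((Fin.cons A B : Fin (n + 1) → Set β) i) := by
    intro i _
    cases i using Fin.cases <;> simp [hA, hB]
  have hprod := h.measure_inter_preimage_eq_mul Finset.univ hsets
  have hset : ⋂ i ∈ (Finset.univ : Finset (Fin (n + 1))),
      (Fin.cons X Y : Fin (n + 1) → Ω → β) i ⁻¹' (Fin.cons A B : Fin (n + 1) → Set β) i =
      X ⁻¹' A ∩ ⋂ i, Y i ⁻¹' B i := by
    ext ω
    simp [Fin.forall_fin_succ]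
  rw [hset, Fin.prod_univ_succ] at hprod
  simp only [measureReal_def, hprod, Fin.cons_zero, Fin.cons_succ, ENNReal.toReal_mul,
    ENNReal.toReal_prod]

section Detectors

variable {M : ℕ}

noncomputable def mlDetector (c Δ : ℝ) (y : Fin M → ℝ) : ℝ :=
  if (∀ i, Δ < y i) ∧ (∑ i, gLLR c Δ (y i)) ≤ 0 then 1 else 0

noncomputable def faDetector (θ : ℝ) (y : Fin M → ℝ) : ℝ :=
  if θ ≤ ⨅ i, y i then 1 else 0

theorem mlDetector_eq_faDetector [Nonempty (Fin M)] {c Δ θ xs : ℝ} (hxs : Δ < xs)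
    (hgneg : ∀ x, xs < x → gLLR c Δ x < 0) (hθ : Δ < θ) (hθxs : θ ≤ xs) {y : Fin M → ℝ}
    (hy : (∀ i, xs < y i) ∨ ∃ i, y i ≤ Δ) :
    mlDetector c Δ y = faDetector θ y := by
  rcases hy with hgt | ⟨i, hi⟩
  · have hml : (∀ i, Δ < y i) ∧ (∑ i, gLLR c Δ (y i)) ≤ 0 :=
      ⟨fun i => hxs.trans (hgt i), Finset.sum_nonpos fun i _ => (hgneg _ (hgt i)).le⟩
    have hfa : θ ≤ ⨅ i, y i := le_ciInf fun i => hθxs.trans (hgt i).le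
    rw [mlDetector, faDetector, if_pos hml, if_pos hfa]
  · have hml : ¬((∀ i, Δ < y i) ∧ (∑ i, gLLR c Δ (y i)) ≤ 0) := fun h => (h.1 i).not_ge hi
    have hfa : ¬(θ ≤ ⨅ i, y i) := fun h =>
      (h.trans (ciInf_le (finite_range y).bddBelow i)).not_gt (hi.trans_lt hθ)
    rw [mlDetector, faDetector, if_neg hml, if_neg hfa]

end Detectors

section Channel

variable {Ω : Type*} {M : ℕ} {S : Ω → ℝ} {Z : Fin M → Ω → ℝ}

theorem setOf_mlDetector_ne_faDetector_subset [Nonempty (Fin M)] {c Δ θ xs : ℝ} (hxs : Δ < xs)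
    (hgneg : ∀ x, xs < x → gLLR c Δ x < 0) (hθ : Δ < θ) (hθxs : θ ≤ xs)
    (hS01 : ∀ ω, S ω = 0 ∨ S ω = 1) :
    {ω | mlDetector c Δ (fun m => Δ * S ω + Z m ω) ≠ faDetector θ (fun m => Δ * S ω + Z m ω)} ⊆
      ((S ⁻¹' {1}ᶜ ∩ {ω | ∀ m, Δ < Z m ω}) \ (S ⁻¹' {1}ᶜ ∩ {ω | ∀ m, xs < Z m ω})) ∪
        (S ⁻¹' {1} \ (S ⁻¹' {1} ∩ {ω | ∀ m, xs - Δ < Z m ω})) := by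
  intro ω hne
  have hband := mt (mlDetector_eq_faDetector hxs hgneg hθ hθxs) hne
  push Not at hband
  obtain ⟨⟨i, hi⟩, hgt⟩ := hband
  rcases hS01 ω with h0 | h1
  · simp only [h0, mul_zero, zero_add] at hi hgt
    left
    simpa [h0, hgt] using ⟨i, hi⟩
  · simp only [h1, mul_one] at hi
    right
    simpa [h1] using ⟨i, by linarith⟩

variable [MeasurableSpace Ω]

theorem measurableSet_setOf_forall_lt (hZmeas : ∀ m, Measurable (Z m)) (t : ℝ) :
    MeasurableSet {ω | ∀ m, t < Z m ω} := by
  rw [ofPred_forall]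
  exact .iInter fun m => measurableSet_lt measurable_const (hZmeas m)

theorem measureReal_preimage_inter_forall_gt {μ : Measure Ω} {c : ℝ} (hc : 0 < c)
    (hZmeas : ∀ m, Measurable (Z m)) (hindep : iIndepFun (Fin.cons S Z : Fin (M + 1) → Ω → ℝ) μ)
    (hlaw : ∀ m, μ.map (Z m) = levyMeasure c) {A : Set ℝ} (hA : MeasurableSet A) {t : ℝ}
    (ht : 0 < t) :
    μ.real (S ⁻¹' A ∩ {ω | ∀ m, t < Z m ω}) = μ.real (S ⁻¹' A) * (1 - levyCDF c t) ^ M := by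
  have htail : ∀ m, μ.real (Z m ⁻¹' Ioi t) = 1 - levyCDF c t := fun m => by
    rw [← map_measureReal_apply (hZmeas m) measurableSet_Ioi, hlaw m, levyMeasure_real_Ioi hc ht]
  have hset : {ω | ∀ m, t < Z m ω} = ⋂ m, Z m ⁻¹' Ioi t := by
    ext ω; simp
  rw [hset, measureReal_inter_iInter_preimage_of_iIndepFun_cons hindep hA
    fun _ => measurableSet_Ioi]
  simp only [htail, Finset.prod_const, Finset.card_univ, Fintype.card_fin]

end Channel

theorem ML_FA_mismatch_bound_general (c Δ θ xs : ℝ) (hc : 0 < c) (hΔ : 0 < Δ)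
    (M : ℕ) (hM : 1 ≤ M)
    (hxs : Δ < xs)
    (hgneg : ∀ x : ℝ, xs < x → gLLR c Δ x < 0)
    (hθ : Δ < θ) (hθxs : θ ≤ xs)
    {Ω : Type*} [MeasurableSpace Ω] (μ : Measure Ω) [IsProbabilityMeasure μ]
    (S : Ω → ℝ) (Z : Fin M → Ω → ℝ)
    (hSmeas : Measurable S) (hZmeas : ∀ m, Measurable (Z m))
    (hS01 : ∀ ω, S ω = 0 ∨ S ω = 1) (hSunif : μ {ω | S ω = 1} = 1 / 2)
    (hindep : iIndepFun (Fin.cons S Z : Fin (M + 1) → Ω → ℝ) μ)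
    (hlaw : ∀ m, μ.map (Z m) = levyMeasure c) :
    μ {ω |
        (if (∀ m, Δ < Δ * S ω + Z m ω) ∧ (∑ m, gLLR c Δ (Δ * S ω + Z m ω)) ≤ 0
          then (1 : ℝ) else 0)
        ≠ (if θ ≤ ⨅ m, (Δ * S ω + Z m ω) then (1 : ℝ) else 0)}
      ≤ ENNReal.ofReal ((1 / 2) * (Psi c M xs - Psi c M Δ + Psi c M (xs - Δ))) := by
  have : Nonempty (Fin M) := ⟨⟨0, hM⟩⟩
  have h1 : MeasurableSet ({1} : Set ℝ) := measurableSet_singleton 1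
  have hone : μ.real (S ⁻¹' {1}) = 1 / 2 := by
    simp [measureReal_def, preimage, hSunif]
  have hzero : μ.real (S ⁻¹' {1}ᶜ) = 1 / 2 := by
    rw [preimage_compl, probReal_compl_eq_one_sub (hSmeas h1), hone]; norm_num
  have hforall_gt (A : Set ℝ) (hA : MeasurableSet A) {t : ℝ} (ht : 0 < t) :=
    measureReal_preimage_inter_forall_gt hc hZmeas hindep hlaw hA ht
  have hmono {s t : ℝ} (hst : s ≤ t) :
      S ⁻¹' {1}ᶜ ∩ {ω | ∀ m, t < Z m ω} ⊆ S ⁻¹' {1}ᶜ ∩ {ω | ∀ m, s < Z m ω} :=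
    inter_subset_inter_right _ fun ω h m => hst.trans_lt (h m)
  have hmeas (A : Set ℝ) (hA : MeasurableSet A) (t : ℝ) :=
    (hSmeas hA).inter (measurableSet_setOf_forall_lt hZmeas t)
  change μ {ω | mlDetector c Δ (fun m => Δ * S ω + Z m ω) ≠
    faDetector θ (fun m => Δ * S ω + Z m ω)} ≤ _
  rw [← ofReal_measureReal]
  refine ENNReal.ofReal_le_ofReal <| (measureReal_mono
    (setOf_mlDetector_ne_faDetector_subset hxs hgneg hθ hθxs hS01)).trans
    ((measureReal_union_le _ _).trans_eq ?_)
  rw [measureReal_sdiff (hmono hxs.le) (hmeas _ h1.compl _), measureReal_sdiff inter_subset_left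
    (hmeas _ h1 _), hforall_gt _ h1.compl hΔ, hforall_gt _ h1.compl (hΔ.trans hxs),
    hforall_gt _ h1 (sub_pos.mpr hxs), hone, hzero, Psi_of_pos c M (hΔ.trans hxs),
    Psi_of_pos c M hΔ, Psi_of_pos c M (sub_pos.mpr hxs)]
  ring

/-- Upper bound on the probability that the ML and first-arrival detectors disagree,
for the `M`-particle binary DBMT channel with equiprobable symbols `0` and `Δ`. -/
theorem ML_FA_mismatch_bound (c Δ θ xs : ℝ) (hc : 0 < c) (hΔ : 0 < Δ)
    (M : ℕ) (hM : 1 ≤ M)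
    (hxs : Δ < xs) (hg0 : gLLR c Δ xs = 0)
    (hgpos : ∀ x : ℝ, Δ < x → x < xs → 0 < gLLR c Δ x)
    (hgneg : ∀ x : ℝ, xs < x → gLLR c Δ x < 0)
    (hθ : Δ < θ) (hθxs : θ ≤ xs)
    {Ω : Type*} [MeasurableSpace Ω] (μ : Measure Ω) [IsProbabilityMeasure μ]
    (S : Ω → ℝ) (Z : Fin M → Ω → ℝ)
    (hSmeas : Measurable S) (hZmeas : ∀ m, Measurable (Z m))
    (hS01 : ∀ ω, S ω = 0 ∨ S ω = 1) (hSunif : μ {ω | S ω = 1} = 1 / 2)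
    (hindep : iIndepFun (Fin.cons S Z : Fin (M + 1) → Ω → ℝ) μ)
    (hlaw : ∀ m, μ.map (Z m) = levyMeasure c) :
    μ {ω |
        (if (∀ m, Δ < Δ * S ω + Z m ω) ∧ (∑ m, gLLR c Δ (Δ * S ω + Z m ω)) ≤ 0
          then (1 : ℝ) else 0)
        ≠ (if θ ≤ ⨅ m, (Δ * S ω + Z m ω) then (1 : ℝ) else 0)}
      ≤ ENNReal.ofReal ((1 / 2) * (Psi c M xs - Psi c M Δ + Psi c M (xs - Δ))) :=
  ML_FA_mismatch_bound_general c Δ θ xs hc hΔ M hM hxs hgneg hθ hθxs μ S Z hSmeas hZmeas hS01 hSunif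
    hindep hlaw
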